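/- Let σ_1, σ_2, σ_3 : ℕ×ℕ → ℕ be injections with pairwise disjoint ranges, and let Λ = {(σ_1(i,j), σ_2(j,k), σ_3(k,i)) : i,j,k ∈ ℕ} ⊂ ℕ³ (coordinates suitably ordered). Then ψ_Λ(n) ≤ n^{3/2} for all n, and consequently dim(Λ) ≤ 3/2. -/

import Mathlib

open Filter Topology

noncomputable section

/-- The space `c₀` of complex null sequences. -/
abbrev c0 : Type := ZeroAtInftyContinuousMap ℕ ℂ

/-- The canonical unit vectors of `c₀`. -/
def e (i : ℕ) : c0 :=
  { toFun := Pi.single i 1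
    continuous_toFun := continuous_of_discreteTopology
    zero_at_infty' := by
      refine Filter.Tendsto.congr' ?_ tendsto_const_nhds
      filter_upwards [Filter.mem_cocompact.mpr ⟨{i}, isCompact_singleton, subset_rfl⟩] with x hx
      simp only [Set.mem_compl_iff, Set.mem_singleton_iff] at hx
      simp [Pi.single_eq_of_ne hx] }

/-- A continuous `m`-linear form on `c₀`. -/
abbrev MForm (m : ℕ) : Type := ContinuousMultilinearMap ℂ (fun _ : Fin m => c0) ℂ

/-- `T` is symmetric. -/
def IsSymmForm {m : ℕ} (T : MForm m) : Prop :=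
  ∀ (σ : Equiv.Perm (Fin m)) (v : Fin m → c0), T (fun k => v (σ k)) = T v

/-- The norm of the `m`-homogeneous polynomial associated to `T`:
`‖P‖ = sup_{x ∈ B_{c₀}} |P x|` where `P x = T (x, …, x)`. -/
def polyNorm {m : ℕ} (T : MForm m) : ℝ :=
  ⨆ x : Metric.closedBall (0 : c0) 1, ‖T (fun _ => (x : c0))‖

/-- Multiplicity of `i` in the index tuple `j`. -/
def mult {m : ℕ} (j : Fin m → ℕ) (i : ℕ) : ℕ :=
  (Finset.univ.filter fun k => j k = i).card

/-- The coefficient of the monomial associated to the (monotone) index tuple `j`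
of the `m`-homogeneous polynomial with symmetric multilinear form `T`:
`c_α(P) = (m!/(α_{i₁}!⋯α_{i_M}!)) ⬝ T(e_{j 1}, …, e_{j m})`. -/
def coeff {m : ℕ} (T : MForm m) (j : Fin m → ℕ) : ℂ :=
  ((Nat.factorial m / ∏ i ∈ Finset.univ.image j, Nat.factorial (mult j i) : ℕ) : ℂ)
    * T (fun k => e (j k))

/-- `ψ_Λ(n)`. -/
def psi {m : ℕ} (Λ : Set (Fin m → ℕ)) (n : ℕ) : ℕ :=
  sSup {c : ℕ | ∃ A : Fin m → Finset ℕ, (∀ i, (A i).card ≤ n) ∧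
    c = ({f | ∀ i, f i ∈ A i} ∩ Λ).ncard}

/-- The combinatorial dimension of `Λ ⊆ ℕ^m`. -/
def combDim {m : ℕ} (Λ : Set (Fin m → ℕ)) : ℝ :=
  Filter.atTop.limsup fun n : ℕ => Real.log (psi Λ n) / Real.log n

end

section Aux

open Finset in
private lemma sum_fiber_fst_le (E : Finset (ℕ × ℕ)) (J : Finset ℕ) :
    ∑ j ∈ J, (E.filter fun p => p.1 = j).card ≤ E.card := by
  classical
  rw [← Finset.card_biUnion (by
    intro a _ b _ hab
    rw [Function.onFun, Finset.disjoint_left]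
    intro p hp hq
    simp only [Finset.mem_filter] at hp hq
    exact hab (hp.2 ▸ hq.2))]
  apply Finset.card_le_card
  intro p hp
  rcases Finset.mem_biUnion.mp hp with ⟨j, _, hp⟩
  exact (Finset.mem_filter.mp hp).1

open Finset in
private lemma sum_fiber_snd_le (E : Finset (ℕ × ℕ)) (J : Finset ℕ) :
    ∑ j ∈ J, (E.filter fun p => p.2 = j).card ≤ E.card := by
  classical
  rw [← Finset.card_biUnion (by
    intro a _ b _ hab
    rw [Function.onFun, Finset.disjoint_left]
    intro p hp hq
    simp only [Finset.mem_filter] at hp hq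
    exact hab (hp.2 ▸ hq.2))]
  apply Finset.card_le_card
  intro p hp
  rcases Finset.mem_biUnion.mp hp with ⟨j, _, hp⟩
  exact (Finset.mem_filter.mp hp).1

private lemma triangle_count (E₁ E₂ E₃ : Finset (ℕ × ℕ)) :
    (((E₁ ×ˢ (E₂.image Prod.snd)).filter
      (fun p => (p.1.2, p.2) ∈ E₂ ∧ (p.2, p.1.1) ∈ E₃)).card) ^ 2
      ≤ E₁.card * (E₂.card * E₃.card) := by
  classical
  set K := E₂.image Prod.snd with hK
  set d : ℕ × ℕ → ℕ := fun e => (K.filter (fun k => (e.2, k) ∈ E₂ ∧ (k, e.1) ∈ E₃)).card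
    with hd
  have hcard : ((E₁ ×ˢ K).filter
      (fun p => (p.1.2, p.2) ∈ E₂ ∧ (p.2, p.1.1) ∈ E₃)).card = ∑ e ∈ E₁, d e := by
    rw [Finset.card_filter, Finset.sum_product]
    simp only [hd, Finset.card_filter]
  have hd2 : ∀ e : ℕ × ℕ, d e ≤ (E₂.filter fun p => p.1 = e.2).card := by
    intro e
    apply Finset.card_le_card_of_injOn (fun k => (e.2, k))
    · intro k hk
      simp only [Finset.mem_coe, Finset.mem_filter] at hk ⊢
      exact ⟨hk.2.1, trivial⟩
    · intro a _ b _ h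
      simpa using h
  have hd3 : ∀ e : ℕ × ℕ, d e ≤ (E₃.filter fun p => p.2 = e.1).card := by
    intro e
    apply Finset.card_le_card_of_injOn (fun k => (k, e.1))
    · intro k hk
      simp only [Finset.mem_coe, Finset.mem_filter] at hk ⊢
      exact ⟨hk.2.2, trivial⟩
    · intro a _ b _ h
      simpa using h
  have CS : (∑ e ∈ E₁, d e) ^ 2 ≤ E₁.card * ∑ e ∈ E₁, (d e) ^ 2 := by
    have h := sq_sum_le_card_mul_sum_sq (s := E₁) (f := fun e => (d e : ℤ))
    have h' : ((∑ e ∈ E₁, d e : ℕ) : ℤ) ^ 2 ≤ (E₁.card : ℤ) * ((∑ e ∈ E₁, (d e) ^ 2 : ℕ) : ℤ) := by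
      push_cast
      exact h
    exact_mod_cast h'
  have step2 : ∑ e ∈ E₁, (d e) ^ 2 ≤
      ∑ e ∈ E₁, (E₂.filter fun p => p.1 = e.2).card * (E₃.filter fun p => p.2 = e.1).card := by
    apply Finset.sum_le_sum
    intro e _
    rw [sq]
    exact Nat.mul_le_mul (hd2 e) (hd3 e)
  have step3 : ∑ e ∈ E₁, (E₂.filter fun p => p.1 = e.2).card * (E₃.filter fun p => p.2 = e.1).card
      ≤ ∑ e ∈ (E₁.image Prod.fst) ×ˢ (E₁.image Prod.snd),
          (E₂.filter fun p => p.1 = e.2).card * (E₃.filter fun p => p.2 = e.1).card := by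
    apply Finset.sum_le_sum_of_subset
    intro p hp
    rw [Finset.mem_product]
    exact ⟨Finset.mem_image_of_mem _ hp, Finset.mem_image_of_mem _ hp⟩
  have step4 : ∑ e ∈ (E₁.image Prod.fst) ×ˢ (E₁.image Prod.snd),
      (E₂.filter fun p => p.1 = e.2).card * (E₃.filter fun p => p.2 = e.1).card
      ≤ E₂.card * E₃.card := by
    rw [Finset.sum_product]
    calc ∑ i ∈ E₁.image Prod.fst, ∑ j ∈ E₁.image Prod.snd,
        (E₂.filter fun p => p.1 = j).card * (E₃.filter fun p => p.2 = i).card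
        = (∑ i ∈ E₁.image Prod.fst, (E₃.filter fun p => p.2 = i).card)
          * (∑ j ∈ E₁.image Prod.snd, (E₂.filter fun p => p.1 = j).card) := by
          rw [Finset.sum_mul_sum]
          apply Finset.sum_congr rfl
          intro i _
          apply Finset.sum_congr rfl
          intro j _
          ring
      _ ≤ E₃.card * E₂.card :=
          Nat.mul_le_mul (sum_fiber_snd_le E₃ _) (sum_fiber_fst_le E₂ _)
      _ = E₂.card * E₃.card := Nat.mul_comm _ _
  calc (((E₁ ×ˢ K).filter (fun p => (p.1.2, p.2) ∈ E₂ ∧ (p.2, p.1.1) ∈ E₃)).card) ^ 2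
      = (∑ e ∈ E₁, d e) ^ 2 := by rw [hcard]
    _ ≤ E₁.card * ∑ e ∈ E₁, (d e) ^ 2 := CS
    _ ≤ E₁.card * (E₂.card * E₃.card) :=
        Nat.mul_le_mul_left _ ((step2.trans step3).trans step4)

private lemma log_nat_nonneg (m : ℕ) : 0 ≤ Real.log m := by
  cases m with
  | zero => simp
  | succ k => exact Real.log_nonneg (by exact_mod_cast Nat.one_le_iff_ne_zero.mpr (Nat.succ_ne_zero k))

end Aux

/-- for the "triangle" index set built from three injections with
pairwise disjoint ranges, `ψ_Λ(n) ≤ n^{3/2}` and hence `dim Λ ≤ 3/2`. -/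
theorem stmt8 (σ₁ σ₂ σ₃ : ℕ × ℕ → ℕ)
    (h₁ : Function.Injective σ₁) (h₂ : Function.Injective σ₂)
    (h₃ : Function.Injective σ₃)
    (hd₁₂ : Disjoint (Set.range σ₁) (Set.range σ₂))
    (hd₂₃ : Disjoint (Set.range σ₂) (Set.range σ₃))
    (hd₁₃ : Disjoint (Set.range σ₁) (Set.range σ₃))
    (Λ : Set (Fin 3 → ℕ))
    (hΛ : Λ = {t | ∃ i j k : ℕ, t 0 = σ₁ (i, j) ∧ t 1 = σ₂ (j, k) ∧ t 2 = σ₃ (k, i)}) :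
    (∀ n : ℕ, (psi Λ n : ℝ) ≤ (n : ℝ) ^ (3/2 : ℝ)) ∧ combDim Λ ≤ 3/2 := by
  classical
  have main : ∀ n : ℕ, (psi Λ n : ℝ) ≤ (n : ℝ) ^ (3/2 : ℝ) := by
    intro n
    have hb : ∀ c ∈ {c : ℕ | ∃ A : Fin 3 → Finset ℕ, (∀ i, (A i).card ≤ n) ∧
        c = ({f | ∀ i, f i ∈ A i} ∩ Λ).ncard}, (c : ℝ) ≤ (n : ℝ) ^ (3/2 : ℝ) := by
      rintro c ⟨A, hA, rfl⟩
      set E₁ : Finset (ℕ × ℕ) := (A 0).preimage σ₁ h₁.injOn with hE₁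
      set E₂ : Finset (ℕ × ℕ) := (A 1).preimage σ₂ h₂.injOn with hE₂
      set E₃ : Finset (ℕ × ℕ) := (A 2).preimage σ₃ h₃.injOn with hE₃
      set T : Finset ((ℕ × ℕ) × ℕ) := (E₁ ×ˢ (E₂.image Prod.snd)).filter
        (fun p => (p.1.2, p.2) ∈ E₂ ∧ (p.2, p.1.1) ∈ E₃) with hT
      -- the intersection injects into T
      have hinj : ({f | ∀ i, f i ∈ A i} ∩ Λ).ncard ≤ T.card := by
        rw [← Set.ncard_coe_finset T]
        apply Set.ncard_le_ncard_of_injOn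
          (fun f => (Function.invFun σ₁ (f 0), (Function.invFun σ₂ (f 1)).2))
        · rintro f ⟨hfA, hfΛ⟩
          rw [hΛ] at hfΛ
          obtain ⟨i, j, k, e0, e1, e2⟩ := hfΛ
          have hi1 : Function.invFun σ₁ (f 0) = (i, j) := by
            rw [e0]; exact Function.leftInverse_invFun h₁ (i, j)
          have hi2 : Function.invFun σ₂ (f 1) = (j, k) := by
            rw [e1]; exact Function.leftInverse_invFun h₂ (j, k)
          simp only [Finset.coe_filter, Set.mem_setOf_eq, Finset.mem_product, hi1, hi2, hT]
          refine ⟨⟨?_, ?_⟩, ?_, ?_⟩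
          · rw [hE₁, Finset.mem_preimage]; rw [← e0]; exact hfA 0
          · exact Finset.mem_image_of_mem Prod.snd (show ((j, k) : ℕ × ℕ) ∈ E₂ by
              rw [hE₂, Finset.mem_preimage]; rw [← e1]; exact hfA 1)
          · rw [hE₂, Finset.mem_preimage]; rw [← e1]; exact hfA 1
          · rw [hE₃, Finset.mem_preimage]; rw [← e2]; exact hfA 2
        · rintro f ⟨_, hfΛ⟩ g ⟨_, hgΛ⟩ heq
          rw [hΛ] at hfΛ hgΛ
          obtain ⟨i, j, k, e0, e1, e2⟩ := hfΛ
          obtain ⟨i', j', k', e0', e1', e2'⟩ := hgΛ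
          have hif : Function.invFun σ₁ (f 0) = (i, j) := by
            rw [e0]; exact Function.leftInverse_invFun h₁ (i, j)
          have hjf : Function.invFun σ₂ (f 1) = (j, k) := by
            rw [e1]; exact Function.leftInverse_invFun h₂ (j, k)
          have hig : Function.invFun σ₁ (g 0) = (i', j') := by
            rw [e0']; exact Function.leftInverse_invFun h₁ (i', j')
          have hjg : Function.invFun σ₂ (g 1) = (j', k') := by
            rw [e1']; exact Function.leftInverse_invFun h₂ (j', k')
          simp only [hif, hjf, hig, hjg, Prod.mk.injEq] at heq
          obtain ⟨⟨hii, hjj⟩, hkk⟩ := heq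
          funext x
          fin_cases x
          · show f 0 = g 0; rw [e0, e0', hii, hjj]
          · show f 1 = g 1; rw [e1, e1', hjj, hkk]
          · show f 2 = g 2; rw [e2, e2', hkk, hii]
      -- bound T.card
      have hE₁c : E₁.card ≤ n := le_trans
        (Finset.card_le_card_of_injOn σ₁ (fun x hx => Finset.mem_preimage.mp hx) h₁.injOn) (hA 0)
      have hE₂c : E₂.card ≤ n := le_trans
        (Finset.card_le_card_of_injOn σ₂ (fun x hx => Finset.mem_preimage.mp hx) h₂.injOn) (hA 1)
      have hE₃c : E₃.card ≤ n := le_trans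
        (Finset.card_le_card_of_injOn σ₃ (fun x hx => Finset.mem_preimage.mp hx) h₃.injOn) (hA 2)
      have hTsq : T.card ^ 2 ≤ n ^ 3 := by
        calc T.card ^ 2 ≤ E₁.card * (E₂.card * E₃.card) := triangle_count E₁ E₂ E₃
          _ ≤ n * (n * n) := Nat.mul_le_mul hE₁c (Nat.mul_le_mul hE₂c hE₃c)
          _ = n ^ 3 := by ring
      have hTr : (T.card : ℝ) ≤ (n : ℝ) ^ (3/2 : ℝ) := by
        have hrw : (n : ℝ) ^ (3/2 : ℝ) = Real.sqrt ((n : ℝ) ^ 3) := by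
          rw [Real.sqrt_eq_rpow, ← Real.rpow_natCast (n : ℝ) 3,
            ← Real.rpow_mul (Nat.cast_nonneg n)]
          norm_num
        rw [hrw]
        apply Real.le_sqrt_of_sq_le
        exact_mod_cast hTsq
      calc (({f | ∀ i, f i ∈ A i} ∩ Λ).ncard : ℝ) ≤ (T.card : ℝ) := by exact_mod_cast hinj
        _ ≤ (n : ℝ) ^ (3/2 : ℝ) := hTr
    -- sSup bound
    have hne : {c : ℕ | ∃ A : Fin 3 → Finset ℕ, (∀ i, (A i).card ≤ n) ∧
        c = ({f | ∀ i, f i ∈ A i} ∩ Λ).ncard}.Nonempty := by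
      refine ⟨({f : Fin 3 → ℕ | ∀ i, f i ∈ (∅ : Finset ℕ)} ∩ Λ).ncard, fun _ => ∅, fun i => by simp, rfl⟩
    have hsup : psi Λ n ≤ ⌊(n : ℝ) ^ (3/2 : ℝ)⌋₊ := by
      apply csSup_le hne
      intro c hc
      exact Nat.le_floor (hb c hc)
    calc (psi Λ n : ℝ) ≤ (⌊(n : ℝ) ^ (3/2 : ℝ)⌋₊ : ℝ) := by exact_mod_cast hsup
      _ ≤ (n : ℝ) ^ (3/2 : ℝ) := Nat.floor_le (by positivity)
  refine ⟨main, ?_⟩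
  unfold combDim
  apply Filter.limsup_le_of_le
  · apply Filter.isCoboundedUnder_le_of_le Filter.atTop (x := 0)
    intro m
    exact div_nonneg (log_nat_nonneg _) (log_nat_nonneg _)
  · filter_upwards [Filter.eventually_ge_atTop 2] with m hm
    have hm1 : (1 : ℝ) < (m : ℝ) := by exact_mod_cast hm
    have hlogm : 0 < Real.log m := Real.log_pos hm1
    rw [div_le_iff₀ hlogm]
    rcases Nat.eq_zero_or_pos (psi Λ m) with h0 | hpos
    · rw [h0]
      simp only [Nat.cast_zero, Real.log_zero]
      positivity
    · have hlog : Real.log (psi Λ m) ≤ Real.log ((m : ℝ) ^ (3/2 : ℝ)) :=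
        Real.log_le_log (by exact_mod_cast hpos) (main m)
      rw [Real.log_rpow (by positivity)] at hlog
      exact hlog
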